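/- The function y(x) = 2 * log((4 - 2*sqrt 2) / ((3 - 2*sqrt 2) * x^2 + 1)) satisfies y''(x) + (1/x) y'(x) + exp(y(x)) = 0 for all x > 0, with y'(0) = 0 and y(1) = 0. -/

import Mathlib

/-!
The function `2 * log (A / (B * x ^ 2 + 1))` with `A ^ 2 = 8 * B`, i.e. `log (8 * B / (1 + B * x ^ 2) ^ 2)`,
is the classical radial solution of Liouville's equation `Δy + e^y = 0` in the plane, and the
cylindrical operator `y'' + y' / x` is the planar Laplacian on radial functions. Its derivative
`-4 * B * x / (B * x ^ 2 + 1)` vanishes at the origin, and `y 1 = 0` amounts to `A = B + 1`.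
Together with `A ^ 2 = 8 * B` this gives `B ^ 2 - 6 * B + 1 = 0`, whose smaller root `3 - 2 * √2` yields
the constants of the theorem.
-/

open Real

namespace RadialLiouville

noncomputable def profile (A B x : ℝ) : ℝ :=
  2 * log (A / (B * x ^ 2 + 1))

variable {A B : ℝ}

lemma hasDerivAt_denom (B x : ℝ) : HasDerivAt (fun x => B * x ^ 2 + 1) (2 * B * x) x := by
  simpa [mul_comm, mul_left_comm] using ((hasDerivAt_pow 2 x).const_mul B).add_const 1

lemma hasDerivAt_profile (hA : A ≠ 0) (hB : 0 ≤ B) (x : ℝ) :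
    HasDerivAt (profile A B) (-4 * B * x / (B * x ^ 2 + 1)) x := by
  have hd : B * x ^ 2 + 1 ≠ 0 := by positivity
  have hquot := ((hasDerivAt_const x A).fun_div (hasDerivAt_denom B x) hd).log (div_ne_zero hA hd)
  refine (hquot.const_mul 2).congr_deriv ?_
  field_simp
  ring

lemma deriv_profile (hA : A ≠ 0) (hB : 0 ≤ B) :
    deriv (profile A B) = fun x => -4 * B * x / (B * x ^ 2 + 1) :=
  funext fun x => (hasDerivAt_profile hA hB x).deriv

lemma hasDerivAt_deriv_profile (hA : A ≠ 0) (hB : 0 ≤ B) (x : ℝ) :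
    HasDerivAt (deriv (profile A B)) (-4 * B * (1 - B * x ^ 2) / (B * x ^ 2 + 1) ^ 2) x := by
  have hd : B * x ^ 2 + 1 ≠ 0 := by positivity
  rw [deriv_profile hA hB]
  refine (((hasDerivAt_id' x).const_mul (-4 * B)).fun_div (hasDerivAt_denom B x) hd).congr_deriv ?_
  field_simp
  ring

lemma exp_profile (hA : A ≠ 0) (hB : 0 ≤ B) (x : ℝ) :
    exp (profile A B x) = A ^ 2 / (B * x ^ 2 + 1) ^ 2 := by
  have hd : B * x ^ 2 + 1 ≠ 0 := by positivity
  have hq : (A / (B * x ^ 2 + 1)) ^ 2 ≠ 0 := pow_ne_zero 2 (div_ne_zero hA hd)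
  rw [profile, ← div_pow, ← exp_log (lt_of_le_of_ne (sq_nonneg _) hq.symm), log_pow]
  norm_num

theorem profile_ode (hAB : A ^ 2 = 8 * B) (hB : 0 < B) {x : ℝ} (hx : x ≠ 0) :
    deriv (deriv (profile A B)) x + (1 / x) * deriv (profile A B) x + exp (profile A B x) = 0 := by
  have hA : A ≠ 0 := by
    rintro rfl
    linarith
  have hd : B * x ^ 2 + 1 ≠ 0 := by positivity
  rw [(hasDerivAt_deriv_profile hA hB.le x).deriv, deriv_profile hA hB.le, exp_profile hA hB.le]
  field_simp
  linear_combination hAB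

lemma deriv_profile_zero (hA : A ≠ 0) (hB : 0 ≤ B) : deriv (profile A B) 0 = 0 := by
  simp [deriv_profile hA hB]

lemma profile_one (hAB : A = B + 1) : profile A B 1 = 0 := by
  simp [profile, hAB]

end RadialLiouville

open RadialLiouville in
theorem thermal_explosion_exact_solution :
    let y : ℝ → ℝ := fun x =>
      2 * Real.log ((4 - 2 * Real.sqrt 2) / ((3 - 2 * Real.sqrt 2) * x ^ 2 + 1))
    (∀ x : ℝ, 0 < x →
      deriv (deriv y) x + (1 / x) * deriv y x + Real.exp (y x) = 0) ∧
    deriv y 0 = 0 ∧ y 1 = 0 := by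
  have hsq : √2 ^ 2 = 2 := sq_sqrt zero_le_two
  have hB : 0 < 3 - 2 * √2 := by nlinarith [sqrt_nonneg 2]
  have hA : 4 - 2 * √2 ≠ 0 := by nlinarith [sqrt_nonneg 2]
  have hAB : (4 - 2 * √2) ^ 2 = 8 * (3 - 2 * √2) := by linear_combination 4 * hsq
  exact ⟨fun x hx => profile_ode hAB hB hx.ne', deriv_profile_zero hA hB.le, profile_one (by ring)⟩
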